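/- Let h : ℝⁿ → ℝ be a smooth convex function and ξ : [0,∞) → ℝⁿ a gradient flow of h, i.e. ξ'(t) = -∇h(ξ(t)). Then for every τ > 0 and every ξ* ∈ ℝⁿ, |∇h(ξ(τ))|² ≤ |∇h(ξ*)|² + |ξ* - ξ(0)|²/τ². -/

import Mathlib

/-!
For convex `h` the gradient is monotone, so two trajectories of the gradient flow never move
apart. Comparing `ξ` with its own time shift `ξ (· + δ)` shows that the speed `‖∇h (ξ t)‖` is
nonincreasing. With the gradient frozen at time `τ`, the Lyapunov function
`Φ t = 2 t (h (ξ t) - h ξ*) + ‖ξ t - ξ*‖² + t² ‖∇h (ξ τ)‖²`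
is therefore nonincreasing on `[0, τ]`: its derivative is
`2 (h (ξ t) - h ξ* - ⟪∇h (ξ t), ξ t - ξ*⟫) + 2 t (‖∇h (ξ τ)‖² - ‖∇h (ξ t)‖²) ≤ 0`.
Finally `Φ τ ≤ Φ 0 = ‖ξ 0 - ξ*‖²`, and bounding `h (ξ τ) - h ξ*` below by
`-‖∇h ξ*‖ ‖ξ τ - ξ*‖` and completing the square gives the claim.
-/

open Real Set Filter Topology

theorem ConvexOn.add_fderiv_le {E : Type*} [NormedAddCommGroup E] [NormedSpace ℝ E]
    {s : Set E} {f : E → ℝ} {f' : E →L[ℝ] ℝ} {x y : E}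
    (hf : ConvexOn ℝ s f) (hx : x ∈ s) (hy : y ∈ s) (hf' : HasFDerivAt f f' x) :
    f x + f' (y - x) ≤ f y := by
  let L : ℝ →ᵃ[ℝ] E := AffineMap.lineMap x y
  have hL : HasDerivAt (f ∘ L) (f' (y - x)) 0 := by
    have hf0 : HasFDerivAt f f' (L 0) := by simpa [L] using hf'
    simpa using hf0.comp_hasDerivAt 0 AffineMap.hasDerivAt_lineMap
  have := (hf.comp_affineMap L).le_slope_of_hasDerivAt (x := 0) (y := 1)
    (by simpa [L] using hx) (by simpa [L] using hy) zero_lt_one hL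
  simp only [slope_def_field, Function.comp_apply, AffineMap.lineMap_apply_one,
    AffineMap.lineMap_apply_zero, sub_zero, div_one, L] at this
  linarith

variable {E : Type*} [NormedAddCommGroup E] [InnerProductSpace ℝ E] [CompleteSpace E]

theorem HasGradientAt.comp_hasDerivAt {f : E → ℝ} {g : E} {u : ℝ → E} {u' : E} {t : ℝ}
    (hf : HasGradientAt f g (u t)) (hu : HasDerivAt u u' t) :
    HasDerivAt (f ∘ u) (inner ℝ g u') t := by
  simpa using hf.hasFDerivAt.comp_hasDerivAt t hu

theorem ConvexOn.add_inner_gradient_le {s : Set E} {f : E → ℝ} {g x y : E}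
    (hf : ConvexOn ℝ s f) (hx : x ∈ s) (hy : y ∈ s) (hg : HasGradientAt f g x) :
    f x + inner ℝ g (y - x) ≤ f y := by
  simpa using hf.add_fderiv_le hx hy hg.hasFDerivAt

theorem ConvexOn.inner_gradient_sub_nonneg {s : Set E} {f : E → ℝ} {gx gy x y : E}
    (hf : ConvexOn ℝ s f) (hx : x ∈ s) (hy : y ∈ s) (hgx : HasGradientAt f gx x)
    (hgy : HasGradientAt f gy y) :
    0 ≤ inner ℝ (gy - gx) (y - x) := by
  have hxy := hf.add_inner_gradient_le hx hy hgx
  have hyx := hf.add_inner_gradient_le hy hx hgy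
  rw [← neg_sub y x, inner_neg_right] at hyx
  rw [inner_sub_left]
  linarith

theorem Convex.antitoneOn_of_hasDerivAt_nonpos {D : Set ℝ} (hD : Convex ℝ D) {φ φ' : ℝ → ℝ}
    (hφ : ∀ t ∈ D, HasDerivAt φ (φ' t) t) (hφ' : ∀ t ∈ D, φ' t ≤ 0) : AntitoneOn φ D :=
  antitoneOn_of_hasDerivWithinAt_nonpos hD
    (fun t ht => (hφ t ht).continuousAt.continuousWithinAt)
    (fun t ht => (hφ t (interior_subset ht)).hasDerivWithinAt)
    (fun t ht => hφ' t (interior_subset ht))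

theorem HasDerivAt.tendsto_norm_sub_div {F : Type*} [NormedAddCommGroup F] [NormedSpace ℝ F]
    {u : ℝ → F} {u' : F} {t : ℝ} (hu : HasDerivAt u u' t) :
    Tendsto (fun δ => ‖u (t + δ) - u t‖ / δ) (𝓝[>] 0) (𝓝 ‖u'‖) := by
  have hslope := (hasDerivAt_iff_tendsto_slope_zero.1 hu).mono_left
    (nhdsWithin_mono _ fun δ (hδ : 0 < δ) => hδ.ne')
  refine hslope.norm.congr' ?_
  filter_upwards [self_mem_nhdsWithin] with δ (hδ : 0 < δ)
  rw [norm_smul, norm_inv, Real.norm_of_nonneg hδ.le, inv_mul_eq_div]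

def IsGradientFlow (f : E → ℝ) (ξ : ℝ → E) : Prop :=
  ∀ t, 0 ≤ t → HasDerivAt ξ (-gradient f (ξ t)) t

noncomputable def lyapunov (f : E → ℝ) (ξ : ℝ → E) (x : E) (τ t : ℝ) : ℝ :=
  2 * t * (f (ξ t) - f x) + ‖ξ t - x‖ ^ 2 + t ^ 2 * ‖gradient f (ξ τ)‖ ^ 2

namespace IsGradientFlow

variable {f : E → ℝ} {ξ η : ℝ → E}

theorem comp_add_const (hξ : IsGradientFlow f ξ) {δ : ℝ} (hδ : 0 ≤ δ) :
    IsGradientFlow f (fun t => ξ (t + δ)) := fun t ht =>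
  (hξ (t + δ) (by linarith)).comp_add_const t δ

theorem hasDerivAt_comp (hξ : IsGradientFlow f ξ) (hf : Differentiable ℝ f) {t : ℝ}
    (ht : 0 ≤ t) : HasDerivAt (f ∘ ξ) (-‖gradient f (ξ t)‖ ^ 2) t := by
  simpa [inner_neg_right, real_inner_self_eq_norm_sq] using
    (hf (ξ t)).hasGradientAt.comp_hasDerivAt (hξ t ht)

theorem antitoneOn_norm_sub (hξ : IsGradientFlow f ξ) (hη : IsGradientFlow f η)
    (hf : Differentiable ℝ f) (hconv : ConvexOn ℝ univ f) :
    AntitoneOn (fun t => ‖ξ t - η t‖) (Ici 0) := by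
  have hsq : AntitoneOn (fun t => ‖ξ t - η t‖ ^ 2) (Ici 0) := by
    refine (convex_Ici 0).antitoneOn_of_hasDerivAt_nonpos
      (fun t ht => ((hξ t ht).sub (hη t ht)).norm_sq) fun t _ => ?_
    have hmono := hconv.inner_gradient_sub_nonneg (mem_univ (η t)) (mem_univ (ξ t))
      (hf (η t)).hasGradientAt (hf (ξ t)).hasGradientAt
    rw [Pi.sub_apply, neg_sub_neg, ← neg_sub (gradient f (ξ t)), inner_neg_right, real_inner_comm]
    linarith
  intro s hs t ht hst
  exact (pow_le_pow_iff_left₀ (norm_nonneg _) (norm_nonneg _) two_ne_zero).1 (hsq hs ht hst)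

theorem antitoneOn_norm_gradient (hξ : IsGradientFlow f ξ) (hf : Differentiable ℝ f)
    (hconv : ConvexOn ℝ univ f) : AntitoneOn (fun t => ‖gradient f (ξ t)‖) (Ici 0) := by
  intro s hs t ht hst
  have hspeed : ∀ r ∈ Ici (0 : ℝ), Tendsto (fun δ => ‖ξ (r + δ) - ξ r‖ / δ) (𝓝[>] 0)
      (𝓝 ‖gradient f (ξ r)‖) := fun r hr => by
    simpa using (hξ r hr).tendsto_norm_sub_div
  refine le_of_tendsto_of_tendsto (hspeed t ht) (hspeed s hs) ?_
  filter_upwards [self_mem_nhdsWithin] with δ (hδ : 0 < δ)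
  have hcontract := (hξ.comp_add_const hδ.le).antitoneOn_norm_sub hξ hf hconv hs ht hst
  exact div_le_div_of_nonneg_right hcontract hδ.le

theorem antitoneOn_lyapunov (hξ : IsGradientFlow f ξ) (hf : Differentiable ℝ f)
    (hconv : ConvexOn ℝ univ f) (x : E) (τ : ℝ) :
    AntitoneOn (lyapunov f ξ x τ) (Icc 0 τ) := by
  refine (convex_Icc 0 τ).antitoneOn_of_hasDerivAt_nonpos (φ' := fun t =>
      2 * (f (ξ t) - f x) - 2 * t * ‖gradient f (ξ t)‖ ^ 2
        + 2 * inner ℝ (ξ t - x) (-gradient f (ξ t)) + 2 * t * ‖gradient f (ξ τ)‖ ^ 2)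
    (fun t ht => ?_) fun t ht => ?_
  · have hderiv := ((((hasDerivAt_id t).const_mul 2).mul
      ((hξ.hasDerivAt_comp hf ht.1).sub_const (f x))).add
      ((hξ t ht.1).sub_const x).norm_sq).add
      ((hasDerivAt_pow 2 t).mul_const (‖gradient f (ξ τ)‖ ^ 2))
    refine hderiv.congr_deriv ?_
    simp only [Function.comp_apply, id_eq, Nat.cast_ofNat, Nat.add_one_sub_one, pow_one]
    ring
  · have hgap : f (ξ t) - f x ≤ inner ℝ (gradient f (ξ t)) (ξ t - x) := by
      have := hconv.add_inner_gradient_le (mem_univ _) (mem_univ x) (hf (ξ t)).hasGradientAt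
      rw [← neg_sub, inner_neg_right] at this
      linarith
    have hspeed : ‖gradient f (ξ τ)‖ ^ 2 ≤ ‖gradient f (ξ t)‖ ^ 2 := by
      gcongr
      exact hξ.antitoneOn_norm_gradient hf hconv ht.1 (ht.1.trans ht.2) ht.2
    simp only [inner_neg_right, real_inner_comm]
    nlinarith [ht.1]

end IsGradientFlow

theorem gradient_flow_norm_grad_sq_bound
    {n : ℕ} (h : EuclideanSpace ℝ (Fin n) → ℝ)
    (hsmooth : ContDiff ℝ 2 h)
    (hconv : ConvexOn ℝ Set.univ h)
    (ξ : ℝ → EuclideanSpace ℝ (Fin n))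
    (hflow : ∀ t : ℝ, 0 ≤ t → HasDerivAt ξ (-(gradient h (ξ t))) t)
    (τ : ℝ) (hτ : 0 < τ) (ξast : EuclideanSpace ℝ (Fin n)) :
    ‖gradient h (ξ τ)‖ ^ 2 ≤ ‖gradient h ξast‖ ^ 2 + ‖ξast - ξ 0‖ ^ 2 / τ ^ 2 := by
  have hd : Differentiable ℝ h := hsmooth.differentiable (by norm_num)
  have hdecay : lyapunov h ξ ξast τ τ ≤ lyapunov h ξ ξast τ 0 :=
    IsGradientFlow.antitoneOn_lyapunov hflow hd hconv ξast τ ⟨le_rfl, hτ.le⟩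
      ⟨hτ.le, le_rfl⟩ hτ.le
  have hfirst := hconv.add_inner_gradient_le (mem_univ ξast) (mem_univ (ξ τ))
    (hd ξast).hasGradientAt
  have hcs := neg_le_of_abs_le (abs_real_inner_le_norm (gradient h ξast) (ξ τ - ξast))
  simp only [lyapunov, mul_zero, zero_mul, zero_pow two_ne_zero, zero_add] at hdecay
  rw [norm_sub_rev, ← sub_le_iff_le_add', le_div_iff₀ (by positivity)]
  nlinarith [sq_nonneg (τ * ‖gradient h ξast‖ - ‖ξ τ - ξast‖)]
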